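/- Let δ₀ ∈ (0, π/(2C₁)) with C₁ > 0. Then for every z ∈ ℂ with |Im z| ≤ δ₀, |exp(−e^{C₁ z} − e^{−C₁ z})| ≤ exp(−cos(C₁ δ₀)·e^{C₁ |Re z|}). -/

import Mathlib

open Complex

lemma Real.exp_abs_le_exp_add_exp_neg (x : ℝ) : Real.exp |x| ≤ Real.exp x + Real.exp (-x) := by
  rcases abs_cases x with ⟨h, _⟩ | ⟨h, _⟩ <;> rw [h]
  · linarith [Real.exp_pos (-x)]
  · linarith [Real.exp_pos x]

lemma Real.cos_le_cos_of_abs_le {x y : ℝ} (hxy : |x| ≤ y) (hy : y ≤ Real.pi) :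
    Real.cos y ≤ Real.cos x := by
  rw [← Real.cos_abs x]
  exact Real.cos_le_cos_of_nonneg_of_le_pi (abs_nonneg x) hy hxy

lemma Complex.re_exp_add_exp_neg (w : ℂ) :
    (exp w + exp (-w)).re = Real.cos w.im * (Real.exp w.re + Real.exp (-w.re)) := by
  simp only [add_re, exp_re, neg_re, neg_im, Real.cos_neg]
  ring

lemma Complex.norm_exp_neg_exp_add_exp_neg_le {w : ℂ} {a : ℝ} (hw : |w.im| ≤ a)
    (ha : a ≤ Real.pi / 2) :
    ‖exp (-(exp w + exp (-w)))‖ ≤ Real.exp (-Real.cos a * Real.exp |w.re|) := by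
  rw [norm_exp, Real.exp_le_exp, neg_re, re_exp_add_exp_neg, neg_mul, neg_le_neg_iff]
  have hcos : Real.cos a ≤ Real.cos w.im :=
    Real.cos_le_cos_of_abs_le hw (by linarith [Real.pi_pos])
  have hcos_nonneg : 0 ≤ Real.cos a :=
    Real.cos_nonneg_of_mem_Icc ⟨by linarith [abs_nonneg w.im, Real.pi_pos], ha⟩
  exact mul_le_mul hcos (Real.exp_abs_le_exp_add_exp_neg w.re) (Real.exp_pos _).le
    (hcos_nonneg.trans hcos)

theorem stmt7 (C₁ δ₀ : ℝ) (hC₁ : 0 < C₁)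
    (hδ₀ : δ₀ ∈ Set.Ioo 0 (Real.pi / (2 * C₁))) :
    ∀ z : ℂ, |z.im| ≤ δ₀ →
      ‖Complex.exp (-Complex.exp ((C₁ : ℂ) * z)
          - Complex.exp (-(C₁ : ℂ) * z))‖
        ≤ Real.exp (-(Real.cos (C₁ * δ₀)) * Real.exp (C₁ * |z.re|)) := by
  intro z hz
  have him : |((C₁ : ℂ) * z).im| ≤ C₁ * δ₀ := by
    rw [im_ofReal_mul, abs_mul, abs_of_pos hC₁]
    exact mul_le_mul_of_nonneg_left hz hC₁.le
  have hδ : C₁ * δ₀ ≤ Real.pi / 2 := by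
    have := (lt_div_iff₀ (by positivity : (0 : ℝ) < 2 * C₁)).mp hδ₀.2
    linarith
  have hre : |((C₁ : ℂ) * z).re| = C₁ * |z.re| := by
    rw [re_ofReal_mul, abs_mul, abs_of_pos hC₁]
  rw [neg_mul, ← hre, ← neg_add']
  exact norm_exp_neg_exp_add_exp_neg_le him hδ
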